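/- arXiv:2009.07120 — 8 statements merged into one kernel-verified Lean document; each statement's English description precedes it below -/
import Mathlib

section
/- For every n >= 7, the generalized Petersen graph GP(n,3) admits no perfect 2-coloring with parameter matrix [[2,1],[2,1]]. -/
/-- The generalized Petersen graph `GP n k`. Vertices are pairs `(s, i)` with
`s : Bool` (`false` = outer vertex `aᵢ`, `true` = inner vertex `bᵢ`) and `i : ZMod n`.
Edges: `aᵢ aᵢ₊₁`, `aᵢ bᵢ`, `bᵢ bᵢ₊ₖ`. -/
def GP (n k : ℕ) : SimpleGraph (Bool × ZMod n) :=
  SimpleGraph.fromRel (fun v w =>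
    (v.1 = false ∧ w.1 = false ∧ w.2 = v.2 + 1) ∨
    (v.1 = false ∧ w.1 = true ∧ w.2 = v.2) ∨
    (v.1 = true ∧ w.1 = true ∧ w.2 = v.2 + (k : ZMod n)))

/-- `T` is a perfect 2-coloring of `G` with parameter matrix `A`:
`T` is surjective onto the two colors (color `0` = white = "1", color `1` = black = "2"),
and every vertex of color `i` has exactly `A i j` neighbors of color `j`. -/
def IsPerfectColoring {V : Type*} (G : SimpleGraph V) (T : V → Fin 2)
    (A : Matrix (Fin 2) (Fin 2) ℕ) : Prop :=
  Function.Surjective T ∧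
  ∀ v : V, ∀ j : Fin 2, {w | G.Adj v w ∧ T w = j}.ncard = A (T v) j

/-!
Write `X i`, `Y i ∈ {0, 1}` for the indicators of the black outer vertex `aᵢ` and inner vertex `bᵢ`.
Every vertex has exactly one black neighbour, so `X (i-1) + X (i+1) + Y i = 1` and
`Y (i-3) + Y (i+3) + X i = 1`. Eliminating `Y (i ± 3)` gives
`X (i-4) + X (i-2) + X (i+2) + X (i+4) = 1 + X i`, while `X i + X (i+2) ≤ 1`.
Some `X i` equals `1` (otherwise `Y ≡ 1`, so an inner vertex has two black neighbours); then
`X (i ± 2) = 0` forces `X (i+4) = 1`, and the relation at `i + 2` reads `2 ≤ 1`.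
-/

structure OneBlackNeighbourGP3 {R : Type*} [CommRing R] (X Y : R → ℕ) : Prop where
  outer : ∀ i, X (i - 1) + X (i + 1) + Y i = 1
  inner : ∀ i, Y (i - 3) + Y (i + 3) + X i = 1

namespace OneBlackNeighbourGP3

variable {R : Type*} [CommRing R] {X Y : R → ℕ}

lemma le_one (h : OneBlackNeighbourGP3 X Y) (i : R) : X i ≤ 1 := by
  have := h.inner i
  omega

lemma add_add_two_le_one (h : OneBlackNeighbourGP3 X Y) (i : R) : X i + X (i + 2) ≤ 1 := by
  have := h.outer (i + 1)
  rw [add_sub_cancel_right, show i + 1 + 1 = i + 2 by ring] at this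
  omega

lemma sum_even_shifts_eq (h : OneBlackNeighbourGP3 X Y) (i : R) :
    X (i - 4) + X (i - 2) + X (i + 2) + X (i + 4) = 1 + X i := by
  have left := h.outer (i - 3)
  have right := h.outer (i + 3)
  have center := h.inner i
  rw [show i - 3 - 1 = i - 4 by ring, show i - 3 + 1 = i - 2 by ring] at left
  rw [show i + 3 - 1 = i + 2 by ring, show i + 3 + 1 = i + 4 by ring] at right
  omega

lemma exists_eq_one (h : OneBlackNeighbourGP3 X Y) : ∃ i, X i = 1 := by
  by_contra! hX
  have hX0 : ∀ i, X i = 0 := fun i => by have := h.le_one i; have := hX i; omega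
  have hY1 : ∀ i, Y i = 1 := fun i => by have := h.outer i; rw [hX0, hX0] at this; omega
  have := h.inner 0
  rw [hY1, hY1, hX0] at this
  omega

end OneBlackNeighbourGP3

theorem not_oneBlackNeighbourGP3 {R : Type*} [CommRing R] (X Y : R → ℕ) :
    ¬ OneBlackNeighbourGP3 X Y := by
  intro h
  obtain ⟨i, hi⟩ := h.exists_eq_one
  have h_right := h.add_add_two_le_one i
  have h_left := h.add_add_two_le_one (i - 2)
  rw [sub_add_cancel] at h_left
  have h_at_i := h.sum_even_shifts_eq i
  have h_at_i_add_two := h.sum_even_shifts_eq (i + 2)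
  rw [add_sub_cancel_right, show i + 2 + 2 = i + 4 by ring] at h_at_i_add_two
  have := h.le_one (i + 4)
  have := h.le_one (i - 4)
  omega

lemma SimpleGraph.ncard_adj_and_of_adj_iff {V : Type*} {G : SimpleGraph V} {v a b c : V}
    (hadj : ∀ w, G.Adj v w ↔ w = a ∨ w = b ∨ w = c) (hab : a ≠ b) (hac : a ≠ c) (hbc : b ≠ c)
    (p : V → Prop) [DecidablePred p] :
    {w | G.Adj v w ∧ p w}.ncard =
      (if p a then 1 else 0) + (if p b then 1 else 0) + (if p c then 1 else 0) := by
  classical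
  have hset : {w | G.Adj v w ∧ p w} = ↑(({a, b, c} : Finset V).filter p) := by
    ext w
    simp [hadj]
  rw [hset, Set.ncard_coe_finset, Finset.card_filter, Finset.sum_insert (by simp [hab, hac]),
    Finset.sum_insert (by simp [hbc]), Finset.sum_singleton, add_assoc]

section GeneralizedPetersen

variable {n k : ℕ}

lemma GP_adj_false_iff (h2 : (2 : ZMod n) ≠ 0) (i : ZMod n) (w : Bool × ZMod n) :
    (GP n k).Adj (false, i) w ↔ w = (false, i - 1) ∨ w = (false, i + 1) ∨ w = (true, i) := by
  have h1 : (1 : ZMod n) ≠ 0 := fun h => h2 (by rw [← one_add_one_eq_two, h, add_zero])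
  obtain ⟨s, j⟩ := w
  cases s <;> simp [GP, eq_sub_iff_add_eq]
  constructor
  · rintro ⟨-, h | h⟩ <;> simp [h]
  · rintro (h | h) <;> subst h <;> simp [h1]

lemma GP_adj_true_iff (h2k : (2 * k : ZMod n) ≠ 0) (i : ZMod n) (w : Bool × ZMod n) :
    (GP n k).Adj (true, i) w ↔ w = (true, i - k) ∨ w = (true, i + k) ∨ w = (false, i) := by
  have hk : (k : ZMod n) ≠ 0 := fun h => h2k (by rw [h, mul_zero])
  obtain ⟨s, j⟩ := w
  cases s <;> simp [GP, eq_sub_iff_add_eq]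
  · exact eq_comm
  constructor
  · rintro ⟨-, h | h⟩ <;> simp [h]
  · rintro (h | h) <;> subst h <;> simp [hk]

lemma GP_ncard_adj_false_and (h2 : (2 : ZMod n) ≠ 0) (i : ZMod n) (p : Bool × ZMod n → Prop)
    [DecidablePred p] :
    {w | (GP n k).Adj (false, i) w ∧ p w}.ncard = (if p (false, i - 1) then 1 else 0) +
      (if p (false, i + 1) then 1 else 0) + (if p (true, i) then 1 else 0) :=
  SimpleGraph.ncard_adj_and_of_adj_iff (GP_adj_false_iff h2 i)
    (by simpa using fun h : i - 1 = i + 1 => h2 (by linear_combination -h)) (by simp) (by simp) p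

lemma GP_ncard_adj_true_and (h2k : (2 * k : ZMod n) ≠ 0) (i : ZMod n) (p : Bool × ZMod n → Prop)
    [DecidablePred p] :
    {w | (GP n k).Adj (true, i) w ∧ p w}.ncard = (if p (true, i - k) then 1 else 0) +
      (if p (true, i + k) then 1 else 0) + (if p (false, i) then 1 else 0) :=
  SimpleGraph.ncard_adj_and_of_adj_iff (GP_adj_true_iff h2k i)
    (by simpa using fun h : i - k = i + k => h2k (by linear_combination -h)) (by simp) (by simp) p

end GeneralizedPetersen

lemma IsPerfectColoring.ncard_adj_one {V : Type*} {G : SimpleGraph V} {T : V → Fin 2}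
    (hT : IsPerfectColoring G T !![2, 1; 2, 1]) (v : V) :
    {w | G.Adj v w ∧ T w = 1}.ncard = 1 := by
  rw [hT.2 v 1]
  generalize T v = t
  fin_cases t <;> rfl

theorem stmt_3 (n : ℕ) (hn : 7 ≤ n) (T : Bool × ZMod n → Fin 2) :
    ¬ IsPerfectColoring (GP n 3) T !![2, 1; 2, 1] := by
  intro hT
  have natCast_ne_zero : ∀ m, 0 < m → m < n → (m : ZMod n) ≠ 0 := fun m hm hmn h =>
    absurd (Nat.le_of_dvd hm ((ZMod.natCast_eq_zero_iff m n).1 h)) (by omega)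
  have h2 : (2 : ZMod n) ≠ 0 := by exact_mod_cast natCast_ne_zero 2 (by norm_num) (by omega)
  have h6 : (2 * (3 : ℕ) : ZMod n) ≠ 0 := by
    exact_mod_cast natCast_ne_zero 6 (by norm_num) (by omega)
  refine not_oneBlackNeighbourGP3 (fun i => if T (false, i) = 1 then 1 else 0)
    (fun i => if T (true, i) = 1 then 1 else 0) ⟨fun i => ?_, fun i => ?_⟩
  · simpa only [GP_ncard_adj_false_and h2] using hT.ncard_adj_one (false, i)
  · simpa only [GP_ncard_adj_true_and h6, Nat.cast_ofNat] using hT.ncard_adj_one (true, i)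
end

section
/- In any perfect 2-coloring T of GP(n,3) (n >= 7) with parameter matrix [[2,1],[2,1]], there is no index i with T(a_i) = T(a_{i+1}) = 2, i.e., no two consecutive outer vertices are both black. -/
theorem ZMod.natCast_ne_zero_of_pos_of_lt {n a : ℕ} (ha : 0 < a) (han : a < n) :
    (a : ZMod n) ≠ 0 := by
  rw [Ne, ZMod.natCast_eq_zero_iff]
  exact Nat.not_dvd_of_pos_of_lt ha han

namespace SimpleGraph

variable {V : Type*} {G : SimpleGraph V} {S : Set V} {v x y z : V}

def IsTotalPerfectCode (G : SimpleGraph V) (S : Set V) : Prop :=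
  ∀ v, (G.neighborSet v ∩ S).ncard = 1

theorem IsTotalPerfectCode.notMem_of_adj (hS : G.IsTotalPerfectCode S) (hx : G.Adj v x)
    (hy : G.Adj v y) (hxy : x ≠ y) (hxS : x ∈ S) : y ∉ S := by
  intro hyS
  obtain ⟨c, hc⟩ := Set.ncard_eq_one.mp (hS v)
  have hxc : x ∈ ({c} : Set V) := hc ▸ ⟨hx, hxS⟩
  have hyc : y ∈ ({c} : Set V) := hc ▸ ⟨hy, hyS⟩
  exact hxy (hxc.trans hyc.symm)

theorem IsTotalPerfectCode.mem_of_forall_adj (hS : G.IsTotalPerfectCode S)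
    (hcov : ∀ w, G.Adj v w → w = x ∨ w = y ∨ w = z) (hx : x ∉ S) (hy : y ∉ S) : z ∈ S := by
  obtain ⟨c, hc⟩ := Set.ncard_eq_one.mp (hS v)
  obtain ⟨hvc, hcS⟩ : c ∈ G.neighborSet v ∩ S := hc ▸ rfl
  rcases hcov c hvc with rfl | rfl | rfl
  exacts [absurd hcS hx, absurd hcS hy, hcS]

end SimpleGraph

theorem one_ne_zero_of_two_ne_zero {R : Type*} [CommRing R] (h2 : (2 : R) ≠ 0) : (1 : R) ≠ 0 :=
  fun h1 => h2 (by linear_combination 2 * h1)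

theorem IsPerfectColoring.isTotalPerfectCode {V : Type*} {G : SimpleGraph V} {T : V → Fin 2}
    {A : Matrix (Fin 2) (Fin 2) ℕ} (h : IsPerfectColoring G T A) (hA : ∀ i, A i 1 = 1) :
    G.IsTotalPerfectCode (T ⁻¹' {1}) := fun v => (h.2 v 1).trans (hA _)

namespace GP

variable {n k : ℕ}

theorem adj_outer_iff (h1 : (1 : ZMod n) ≠ 0) (j : ZMod n) (w : Bool × ZMod n) :
    (GP n k).Adj (false, j) w ↔ w = (false, j - 1) ∨ w = (false, j + 1) ∨ w = (true, j) := by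
  simp only [GP, SimpleGraph.fromRel_adj, Prod.ext_iff]; grind

theorem adj_inner_iff (hk : (k : ZMod n) ≠ 0) (j : ZMod n) (w : Bool × ZMod n) :
    (GP n k).Adj (true, j) w ↔ w = (true, j - k) ∨ w = (true, j + k) ∨ w = (false, j) := by
  simp only [GP, SimpleGraph.fromRel_adj, Prod.ext_iff]; grind

variable {S : Set (Bool × ZMod n)} {j : ZMod n}

theorem outer_notMem_of_succ_mem (h2 : (2 : ZMod n) ≠ 0)
    (hS : (GP n 3).IsTotalPerfectCode S) (h : (false, j + 1) ∈ S) :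
    (false, j - 1) ∉ S ∧ (true, j) ∉ S := by
  have adj := adj_outer_iff (k := 3) (one_ne_zero_of_two_ne_zero h2) j
  have hsucc := (adj (false, j + 1)).2 (by simp)
  exact ⟨hS.notMem_of_adj hsucc ((adj _).2 (by simp))
      (fun he => h2 (by linear_combination (Prod.ext_iff.mp he).2)) h,
    hS.notMem_of_adj hsucc ((adj _).2 (by simp)) (by simp) h⟩

theorem outer_notMem_of_pred_mem (h2 : (2 : ZMod n) ≠ 0)
    (hS : (GP n 3).IsTotalPerfectCode S) (h : (false, j - 1) ∈ S) :
    (false, j + 1) ∉ S ∧ (true, j) ∉ S := by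
  have adj := adj_outer_iff (k := 3) (one_ne_zero_of_two_ne_zero h2) j
  have hpred := (adj (false, j - 1)).2 (by simp)
  exact ⟨hS.notMem_of_adj hpred ((adj _).2 (by simp))
      (fun he => h2 (by linear_combination -(Prod.ext_iff.mp he).2)) h,
    hS.notMem_of_adj hpred ((adj _).2 (by simp)) (by simp) h⟩

theorem inner_notMem_of_outer_mem (h3 : (3 : ZMod n) ≠ 0)
    (hS : (GP n 3).IsTotalPerfectCode S) (h : (false, j) ∈ S) : (true, j + 3) ∉ S := by
  have adj := adj_inner_iff (n := n) (k := 3) (by simpa using h3) j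
  exact hS.notMem_of_adj ((adj _).2 (by simp)) ((adj _).2 (by simp)) (by simp) h

theorem outer_succ_mem (h2 : (2 : ZMod n) ≠ 0) (hS : (GP n 3).IsTotalPerfectCode S)
    (hpred : (false, j - 1) ∉ S) (hinner : (true, j) ∉ S) : (false, j + 1) ∈ S :=
  hS.mem_of_forall_adj (fun w hw => by
    rcases (adj_outer_iff (one_ne_zero_of_two_ne_zero h2) j w).1 hw with h | h | h <;> simp [h])
    hpred hinner

theorem inner_add_mem (h3 : (3 : ZMod n) ≠ 0) (hS : (GP n 3).IsTotalPerfectCode S)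
    (houter : (false, j) ∉ S) (hsub : (true, j - 3) ∉ S) : (true, j + 3) ∈ S :=
  hS.mem_of_forall_adj (fun w hw => by
    rcases (adj_inner_iff (by simpa using h3) j w).1 hw with h | h | h <;> simp_all)
    houter hsub

theorem outer_add_four_mem (h2 : (2 : ZMod n) ≠ 0) (h3 : (3 : ZMod n) ≠ 0)
    (hS : (GP n 3).IsTotalPerfectCode S) {p : ZMod n} (hp : (false, p) ∈ S)
    (hp1 : (false, p + 1) ∈ S) : (false, p + 4) ∈ S ∧ (false, p + 5) ∈ S := by
  have hp2 : (false, p + 2) ∉ S := by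
    have := (outer_notMem_of_pred_mem h2 hS (j := p + 1) (by simpa using hp)).1
    ring_nf at this ⊢; exact this
  have hp3 : (false, p + 3) ∉ S := by
    have := (outer_notMem_of_pred_mem h2 hS (j := p + 2) (by ring_nf at hp1 ⊢; exact hp1)).1
    ring_nf at this ⊢; exact this
  have hb3 : (true, p + 3) ∉ S := inner_notMem_of_outer_mem h3 hS hp
  have hb4 : (true, p + 4) ∉ S := by
    have := inner_notMem_of_outer_mem h3 hS hp1
    ring_nf at this ⊢; exact this
  have hp4 : (false, p + 4) ∈ S := by
    have := outer_succ_mem h2 hS (j := p + 3) (by ring_nf at hp2 ⊢; exact hp2) hb3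
    ring_nf at this ⊢; exact this
  refine ⟨hp4, ?_⟩
  have := outer_succ_mem h2 hS (j := p + 4) (by ring_nf at hp3 ⊢; exact hp3) hb4
  ring_nf at this ⊢; exact this

theorem not_outer_mem_and_succ_mem (h2 : (2 : ZMod n) ≠ 0) (h3 : (3 : ZMod n) ≠ 0)
    (hS : (GP n 3).IsTotalPerfectCode S) (p : ZMod n) :
    ¬ ((false, p) ∈ S ∧ (false, p + 1) ∈ S) := by
  rintro ⟨hp, hp1⟩
  obtain ⟨hp4, hp5⟩ := outer_add_four_mem h2 h3 hS hp hp1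
  have hp2 : (false, p + 2) ∉ S := by
    have := (outer_notMem_of_pred_mem h2 hS (j := p + 1) (by simpa using hp)).1
    ring_nf at this ⊢; exact this
  have hb : (true, p - 1) ∉ S := (outer_notMem_of_succ_mem h2 hS (by simpa using hp)).2
  have hb5 : (true, p + 5) ∉ S :=
    (outer_notMem_of_pred_mem h2 hS (j := p + 5) (by ring_nf at hp4 ⊢; exact hp4)).2
  have := inner_add_mem h3 hS (j := p + 2) hp2 (by ring_nf at hb ⊢; exact hb)
  ring_nf at this hb5; exact hb5 this

end GP

theorem stmt_4 (n : ℕ) (hn : 7 ≤ n) (T : Bool × ZMod n → Fin 2)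
    (h : IsPerfectColoring (GP n 3) T !![2, 1; 2, 1]) :
    ∀ i : ZMod n, ¬ (T (false, i) = 1 ∧ T (false, i + 1) = 1) := by
  have h2 : (2 : ZMod n) ≠ 0 := by
    simpa using ZMod.natCast_ne_zero_of_pos_of_lt (n := n) (a := 2) (by norm_num) (by omega)
  have h3 : (3 : ZMod n) ≠ 0 := by
    simpa using ZMod.natCast_ne_zero_of_pos_of_lt (n := n) (a := 3) (by norm_num) (by omega)
  have hS := h.isTotalPerfectCode (fun i => by fin_cases i <;> rfl)
  exact GP.not_outer_mem_and_succ_mem h2 h3 hS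
end

section
/- For every even n >= 8, the generalized Petersen graph GP(n,3) admits a perfect 2-coloring with parameter matrix [[1,2],[2,1]]; explicitly, the map T with T(a_{2i}) = T(b_{2i}) = 1 and T(a_{2i+1}) = T(b_{2i+1}) = 2 is such a coloring. -/
/-!
Since `n` is even, reducing the index modulo 2 is a ring homomorphism `ZMod n → ZMod 2`, and we
colour every vertex by the parity of its index. Along a rim edge `aᵢ aᵢ₊₁` or an inner edge
`bᵢ bᵢ₊ₖ` with `k` odd the parity changes, along a spoke `aᵢ bᵢ` it does not. So each vertex
sees its own colour exactly once (the spoke) and the other colour twice, provided its two rim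
(resp. inner) neighbours `i ± 1` (resp. `i ± k`) are distinct, i.e. `2 ≠ 0` and `2k ≠ 0` in
`ZMod n`; for `k = 3` this is where `n ≥ 8` enters.
-/

section

variable {n : ℕ}

lemma GP_adj_outer_iff (k : ℕ) (h1 : (1 : ZMod n) ≠ 0) (i : ZMod n) (w : Bool × ZMod n) :
    (GP n k).Adj (false, i) w ↔ w = (false, i + 1) ∨ w = (false, i - 1) ∨ w = (true, i) := by
  rcases w with ⟨_ | _, j⟩ <;> simp [GP, Prod.ext_iff]
  grind

lemma GP_adj_inner_iff {k : ℕ} (hk : (k : ZMod n) ≠ 0) (i : ZMod n) (w : Bool × ZMod n) :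
    (GP n k).Adj (true, i) w ↔ w = (true, i + k) ∨ w = (true, i - k) ∨ w = (false, i) := by
  rcases w with ⟨_ | _, j⟩ <;> simp [GP, Prod.ext_iff] <;> grind

end

lemma ncard_adj_color_eq {V : Type*} {G : SimpleGraph V} {T : V → ZMod 2} {v x y z : V}
    (hN : ∀ w, G.Adj v w ↔ w = x ∨ w = y ∨ w = z) (hxy : x ≠ y)
    (hx : T x = T v + 1) (hy : T y = T v + 1) (hz : T z = T v) (j : ZMod 2) :
    {w | G.Adj v w ∧ T w = j}.ncard = !![1, 2; 2, 1] (T v) j := by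
  obtain rfl | rfl : j = T v ∨ j = T v + 1 := by generalize T v = c; revert j c; decide
  · have : {w | G.Adj v w ∧ T w = T v} = {z} := by
      ext w; simp only [Set.mem_ofPred_eq, hN, Set.mem_singleton_iff]; grind
    rw [this, Set.ncard_singleton]
    generalize T v = c; revert c; decide
  · have : {w | G.Adj v w ∧ T w = T v + 1} = {x, y} := by
      ext w; simp only [Set.mem_ofPred_eq, hN, Set.mem_insert_iff, Set.mem_singleton_iff]; grind
    rw [this, Set.ncard_pair hxy]
    generalize T v = c; revert c; decide

theorem isPerfectColoring_GP_parity {n k : ℕ} (hn : 2 ∣ n) (hk : Odd k)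
    (h2 : (2 : ZMod n) ≠ 0) (h2k : (2 * k : ZMod n) ≠ 0) :
    IsPerfectColoring (GP n k) (fun v => ZMod.castHom hn (ZMod 2) v.2) !![1, 2; 2, 1] := by
  set φ := ZMod.castHom hn (ZMod 2)
  have h1 : (1 : ZMod n) ≠ 0 := fun h => h2 (by rw [← one_add_one_eq_two, h, add_zero])
  have hφk : φ k = 1 := by rw [map_natCast, ZMod.natCast_eq_one_iff_odd]; exact hk
  refine ⟨fun c => ⟨(false, (c.val : ZMod n)), ?_⟩, ?_⟩
  · simp only [φ, map_natCast]
    exact ZMod.natCast_zmod_val (n := 2) c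
  rintro ⟨_ | _, i⟩
  · refine ncard_adj_color_eq (GP_adj_outer_iff k h1 i) ?_ ?_ ?_ rfl
    · simp only [ne_eq, Prod.mk.injEq, true_and]
      exact fun h => h2 (by linear_combination h)
    · simp
    · simp [sub_eq_add_neg, ZMod.neg_eq_self_mod_two]
  · refine ncard_adj_color_eq (GP_adj_inner_iff (right_ne_zero_of_mul h2k) i) ?_ ?_ ?_ rfl
    · simp only [ne_eq, Prod.mk.injEq, true_and]
      exact fun h => h2k (by linear_combination h)
    · simp [hφk]
    · simp [sub_eq_add_neg, ZMod.neg_eq_self_mod_two, hφk]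

lemma natCast_zmod_two_eq_ite (m : ℕ) : (m : ZMod 2) = if m % 2 = 0 then 0 else 1 := by
  rw [← ZMod.natCast_mod]
  rcases Nat.mod_two_eq_zero_or_one m with h | h <;> simp [h]

theorem stmt_5 (n : ℕ) (hn : 8 ≤ n) (hEven : Even n) :
    IsPerfectColoring (GP n 3)
      (fun v => if v.2.val % 2 = 0 then 0 else 1) !![1, 2; 2, 1] := by
  have : NeZero n := ⟨by omega⟩
  have hcast : ∀ m : ℕ, 0 < m → m < 8 → (m : ZMod n) ≠ 0 := fun m hm0 hm8 h =>
    absurd (Nat.le_of_dvd hm0 ((ZMod.natCast_eq_zero_iff m n).1 h)) (by omega)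
  have hT : (fun v : Bool × ZMod n => if v.2.val % 2 = 0 then (0 : Fin 2) else 1) =
      fun v => ZMod.castHom hEven.two_dvd (ZMod 2) v.2 := by
    funext v
    rw [ZMod.castHom_apply, ← ZMod.natCast_val, natCast_zmod_two_eq_ite]
    rfl
  rw [hT]
  exact isPerfectColoring_GP_parity hEven.two_dvd (by decide) (hcast 2 (by omega) (by omega))
    (by exact_mod_cast hcast 6 (by omega) (by omega))
end

section
/- For every odd n >= 7, the generalized Petersen graph GP(n,3) admits no perfect 2-coloring with parameter matrix [[1,2],[2,1]]. -/
open Finset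

namespace IsPerfectColoring

variable {V : Type*} [Fintype V] {G : SimpleGraph V} [DecidableRel G.Adj]
  {T : V → Fin 2} {A : Matrix (Fin 2) (Fin 2) ℕ}

lemma card_neighborFinset_filter (hT : IsPerfectColoring G T A) (v : V) (j : Fin 2) :
    #{w ∈ G.neighborFinset v | T w = j} = A (T v) j := by
  rw [← hT.2 v j, ← Set.ncard_coe_finset]
  congr 1
  ext w
  simp

lemma card_colorClass_mul_eq (hT : IsPerfectColoring G T A) (i j : Fin 2) :
    #{v | T v = i} * A i j = #{v | T v = j} * A j i := by
  refine card_mul_eq_card_mul G.Adj (fun v hv ↦ ?_) (fun w hw ↦ ?_)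
  · rw [mem_filter] at hv
    rw [← hv.2, ← hT.card_neighborFinset_filter v j, bipartiteAbove]
    congr 1
    ext w
    simp [and_comm]
  · rw [mem_filter] at hw
    rw [← hw.2, ← hT.card_neighborFinset_filter w i, bipartiteBelow]
    congr 1
    ext v
    simp [G.adj_comm, and_comm]

lemma even_card_colorClass_mul (hT : IsPerfectColoring G T A) (i : Fin 2) :
    Even (#{v | T v = i} * A i i) := by
  classical
  let s : Set V := {v | T v = i}
  have hdeg (v : s) : (G.induce s).degree v = A i i := by
    calc (G.induce s).degree v = #{w ∈ G.neighborFinset v | T w = i} := by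
          rw [← SimpleGraph.card_neighborFinset_eq_degree, ← card_map (.subtype (· ∈ s)),
            G.map_neighborFinset_induce]
          congr 1
          ext w
          simp [s]
      _ = A i i := by rw [hT.card_neighborFinset_filter, v.2]
  have hcard : Fintype.card s = #{v | T v = i} := by
    simp [s, Fintype.card_subtype]
  refine ⟨#(G.induce s).edgeFinset, ?_⟩
  rw [← two_mul, ← SimpleGraph.sum_degrees_eq_twice_card_edges, ← hcard]
  simp [hdeg]

lemma four_dvd_card (hT : IsPerfectColoring G T !![1, 2; 2, 1]) : 4 ∣ Fintype.card V := by
  have hbalanced := hT.card_colorClass_mul_eq 0 1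
  have heven := hT.even_card_colorClass_mul 0
  have hsplit : #{v | T v = 0} + #{v | T v = 1} = Fintype.card V := by
    rw [← card_univ, ← card_filter_add_card_filter_not (s := univ) (p := fun v ↦ T v = 0)]
    congr 2
    exact filter_congr fun v _ ↦ by fin_omega
  simp only [Matrix.of_apply, Matrix.cons_val', Matrix.cons_val_zero, Matrix.cons_val_one,
    Matrix.empty_val', Matrix.cons_val_fin_one, mul_one] at hbalanced heven
  obtain ⟨k, hk⟩ := heven
  omega

end IsPerfectColoring

theorem stmt_6_general (n : ℕ) (hOdd : Odd n) (T : Bool × ZMod n → Fin 2) :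
    ¬ IsPerfectColoring (GP n 3) T !![1, 2; 2, 1] := by
  have : NeZero n := ⟨hOdd.pos.ne'⟩
  classical
  intro hT
  have h4 := hT.four_dvd_card
  rw [Fintype.card_prod, Fintype.card_bool, ZMod.card] at h4
  obtain ⟨m, rfl⟩ := hOdd
  omega

theorem stmt_6 (n : ℕ) (hn : 7 ≤ n) (hOdd : Odd n) (T : Bool × ZMod n → Fin 2) :
    ¬ IsPerfectColoring (GP n 3) T !![1, 2; 2, 1] :=
  stmt_6_general n hOdd T
end

section
/- For every n >= 8 with 4 dividing n, the generalized Petersen graph GP(n,3) admits a perfect 2-coloring with parameter matrix [[0,3],[1,2]]; explicitly, the map T with T(a_{4i}) = T(b_{4i+2}) = 1 and T of all other vertices equal to 2 is such a coloring. -/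
/-!
The coloring only depends on the side of a vertex and on its index mod 4, so it is the pullback of
a coloring of `GP 4 3` along `(s, i) ↦ (s, i mod 4)`. Because `4 ∣ n`, this map is a graph covering
`GP n 3 → GP 4 3`: the neighbours `i ± 1` and `i ± 3` stay pairwise distinct mod 4. Perfect colorings
pull back along surjective coverings, and on the 8 vertices of `GP 4 3` the neighbour counts are
checked by evaluation.
-/

open Function Set

section

variable {α β V W : Type*}

def SimpleGraph.IsCovering (G : SimpleGraph V) (H : SimpleGraph W) (f : V → W) : Prop :=
  ∀ v, BijOn f (G.neighborSet v) (H.neighborSet (f v))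

theorem IsPerfectColoring.comp_of_isCovering {G : SimpleGraph V} {H : SimpleGraph W}
    {f : V → W} {T : W → Fin 2} {A : Matrix (Fin 2) (Fin 2) ℕ} (hT : IsPerfectColoring H T A)
    (hf : G.IsCovering H f) (hsurj : Surjective f) : IsPerfectColoring G (T ∘ f) A := by
  refine ⟨hT.1.comp hsurj, fun v j => ?_⟩
  have hset : {w | G.Adj v w ∧ (T ∘ f) w = j} = G.neighborSet v ∩ f ⁻¹' {u | T u = j} := rfl
  rw [hset, comp_apply, ← hT.2 (f v) j, ← ((hf v).injOn.mono inter_subset_left).ncard_image,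
    image_inter_preimage, (hf v).image_eq]
  rfl

theorem Set.bijOn_triple {f : α → β} {x y z : α} (hxy : f x ≠ f y) (hxz : f x ≠ f z)
    (hyz : f y ≠ f z) : BijOn f {x, y, z} {f x, f y, f z} := by
  have hinj : InjOn f {x, y, z} := by
    rintro a (rfl | rfl | rfl) b (rfl | rfl | rfl) hab <;> first | rfl | simp_all [eq_comm]
  simpa [image_insert_eq] using hinj.bijOn_image

theorem SimpleGraph.ncard_adj_and_eq_card_filter [DecidableEq V] {G : SimpleGraph V} {v : V}
    {s : Finset V} (hs : G.neighborSet v = s) {T : V → Fin 2} {j : Fin 2} :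
    {w | G.Adj v w ∧ T w = j}.ncard = (s.filter (T · = j)).card := by
  rw [← Set.ncard_coe_finset, Finset.coe_filter]
  simp_rw [← Finset.mem_coe, ← hs]
  rfl

end

theorem ZMod.val_castHom {m n : ℕ} [NeZero n] (h : m ∣ n) (i : ZMod n) :
    (castHom h (ZMod m) i).val = i.val % m := by
  rw [castHom_apply, cast_eq_val, val_natCast]

namespace GP

variable {n k : ℕ}

theorem neighborSet_outer (h1 : (1 : ZMod n) ≠ 0) (i : ZMod n) :
    (GP n k).neighborSet (false, i) = {(false, i + 1), (false, i - 1), (true, i)} := by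
  ext ⟨s, j⟩
  cases s <;> simp [GP, eq_sub_iff_add_eq]
  constructor
  · rintro ⟨-, h | h⟩ <;> simp [h]
  · rintro (rfl | rfl) <;> simp [h1, eq_comm]

theorem neighborSet_inner (hk : (k : ZMod n) ≠ 0) (i : ZMod n) :
    (GP n k).neighborSet (true, i) = {(true, i + k), (true, i - k), (false, i)} := by
  ext ⟨s, j⟩
  cases s <;> simp [GP, eq_sub_iff_add_eq]
  · exact eq_comm
  constructor
  · rintro ⟨-, h | h⟩ <;> simp [h]
  · rintro (rfl | rfl) <;> simp [hk, eq_comm]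

theorem isCovering_map_castHom {m : ℕ} (hmn : m ∣ n) (h2 : (2 : ZMod m) ≠ 0)
    (h2k : (2 * k : ZMod m) ≠ 0) :
    (GP n k).IsCovering (GP m k) (Prod.map id (ZMod.castHom hmn (ZMod m))) := by
  set π := ZMod.castHom hmn (ZMod m)
  have h1 : (1 : ZMod m) ≠ 0 := fun h => h2 (by linear_combination 2 * h)
  have hk : (k : ZMod m) ≠ 0 := fun h => h2k (by linear_combination 2 * h)
  have h1' : (1 : ZMod n) ≠ 0 := fun h => h1 (by simpa using congrArg π h)
  have hk' : (k : ZMod n) ≠ 0 := fun h => hk (by simpa using congrArg π h)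
  rintro ⟨_ | _, i⟩
  · rw [Prod.map_apply, id, neighborSet_outer h1', neighborSet_outer h1]
    convert bijOn_triple (f := Prod.map id π) _ _ _ using 1
    · simp
    · simpa using fun h => h2 (by linear_combination h)
    all_goals simp
  · rw [Prod.map_apply, id, neighborSet_inner hk', neighborSet_inner hk]
    convert bijOn_triple (f := Prod.map id π) _ _ _ using 1
    · simp
    · simpa using fun h => h2k (by linear_combination h)
    all_goals simp

def mod4Coloring (n : ℕ) (v : Bool × ZMod n) : Fin 2 :=
  if (v.1 = false ∧ v.2.val % 4 = 0) ∨ (v.1 = true ∧ v.2.val % 4 = 2) then 0 else 1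

theorem mod4Coloring_comp_castHom [NeZero n] (h4 : 4 ∣ n) :
    mod4Coloring 4 ∘ Prod.map id (ZMod.castHom h4 (ZMod 4)) = mod4Coloring n := by
  funext ⟨s, i⟩
  simp only [comp_apply, Prod.map_apply, id, mod4Coloring, ZMod.val_castHom, Nat.mod_mod]

theorem isPerfectColoring_mod4Coloring_four :
    IsPerfectColoring (GP 4 3) (mod4Coloring 4) !![0, 3; 1, 2] := by
  refine ⟨fun j => ?_, ?_⟩
  · fin_cases j
    exacts [⟨(false, 0), rfl⟩, ⟨(true, 0), rfl⟩]
  rintro ⟨_ | _, r⟩ j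
  · rw [SimpleGraph.ncard_adj_and_eq_card_filter (s := {(false, r + 1), (false, r - 1), (true, r)})
      ((neighborSet_outer (by decide) r).trans (by simp))]
    revert r j
    decide
  · rw [SimpleGraph.ncard_adj_and_eq_card_filter (s := {(true, r + 3), (true, r - 3), (false, r)})
      ((neighborSet_inner (by decide) r).trans (by simp))]
    revert r j
    decide

end GP

theorem stmt_7 (n : ℕ) (hn : 8 ≤ n) (hdvd : 4 ∣ n) :
    IsPerfectColoring (GP n 3)
      (fun v =>
        if (v.1 = false ∧ v.2.val % 4 = 0) ∨ (v.1 = true ∧ v.2.val % 4 = 2) then 0 else 1)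
      !![0, 3; 1, 2] := by
  have : NeZero n := ⟨by omega⟩
  have hcover := GP.isCovering_map_castHom (k := 3) hdvd (by decide) (by decide)
  have hsurj : Surjective (Prod.map (id : Bool → Bool) (ZMod.castHom hdvd (ZMod 4))) :=
    surjective_id.prodMap (ZMod.ringHom_surjective _)
  have := GP.isPerfectColoring_mod4Coloring_four.comp_of_isCovering hcover hsurj
  rwa [GP.mod4Coloring_comp_castHom] at this
end

section
/- For every m >= 2 and t >= 0 with 5t+3 < 5m/2, the generalized Petersen graph GP(5m, 5t+3) admits a perfect 2-coloring with parameter matrix [[0,3],[2,1]]; explicitly, the map T with T(a_{5i+1}) = T(a_{5i+4}) = T(b_{5i+2}) = T(b_{5i+3}) = 1 and T of all other vertices equal to 2 is such a coloring. -/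
/-!
Reducing indices modulo 5 maps `GP(5m, 5t+3)` onto `GP(5, 3)`, the Petersen graph, and this map
is a covering: it sends the three neighbours of every vertex bijectively onto the three
neighbours of its image, since `2` and `2 · 3` are nonzero modulo 5. Neighbour counts are
therefore preserved, so a perfect coloring of the Petersen graph pulls back to a perfect coloring
of `GP(5m, 5t+3)` with the same matrix. The given coloring is the pullback of the coloring of the
Petersen graph with colour class `{a₁, a₄, b₂, b₃}`, which is perfect by a finite check.
-/

namespace SimpleGraph

variable {V W : Type*}

def IsCovering_s11 (G : SimpleGraph V) (H : SimpleGraph W) (f : V → W) : Prop :=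
  ∀ v, Set.BijOn f (G.neighborSet v) (H.neighborSet (f v))

lemma ncard_adj_and_eq_card_filter_s11 {G : SimpleGraph V} {v : V} {F : Finset V}
    (hF : G.neighborSet v = F) (P : V → Prop) [DecidablePred P] :
    {w | G.Adj v w ∧ P w}.ncard = (F.filter P).card := by
  rw [← Set.ncard_coe_finset, Finset.coe_filter]
  simp only [← Finset.mem_coe, ← hF, mem_neighborSet]

end SimpleGraph

open SimpleGraph

lemma Set.bijOn_triple_s11 {α β : Type*} {f : α → β} {a b c : α} (hab : f a ≠ f b)
    (hac : f a ≠ f c) (hbc : f b ≠ f c) : Set.BijOn f {a, b, c} {f a, f b, f c} := by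
  have hinj : Set.InjOn f {a, b, c} := by
    rintro x (rfl | rfl | rfl) y (rfl | rfl | rfl) h <;> first | rfl | simp_all
  simpa [Set.image_insert_eq] using hinj.bijOn_image

lemma IsPerfectColoring.comp_covering {V W : Type*} {G : SimpleGraph V} {H : SimpleGraph W}
    {c : W → Fin 2} {A : Matrix (Fin 2) (Fin 2) ℕ} (hc : IsPerfectColoring H c A) {f : V → W}
    (hf : G.IsCovering_s11 H f) (hsurj : Function.Surjective f) :
    IsPerfectColoring G (c ∘ f) A := by
  refine ⟨hc.1.comp hsurj, fun v j => ?_⟩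
  rw [Function.comp_apply, ← hc.2 (f v) j]
  exact ((hf v).inter_mapsTo (Set.mapsTo_preimage f {u | c u = j}) Set.inter_subset_right).ncard_eq

section GP

variable {n : ℕ}

lemma GP_neighborSet_false (k : ℕ) (h1 : (1 : ZMod n) ≠ 0) (i : ZMod n) :
    (GP n k).neighborSet (false, i) = {(false, i + 1), (false, i - 1), (true, i)} := by
  ext ⟨_ | _, j⟩ <;> simp only [GP, mem_neighborSet, fromRel_adj] <;> grind

lemma GP_neighborSet_true (k : ℕ) (hk : (k : ZMod n) ≠ 0) (i : ZMod n) :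
    (GP n k).neighborSet (true, i) = {(true, i + k), (true, i - k), (false, i)} := by
  ext ⟨_ | _, j⟩ <;> simp only [GP, mem_neighborSet, fromRel_adj] <;> grind

lemma GP_isCovering_prodMap {d k k' : ℕ} (π : ZMod n →+* ZMod d) (hk : (k : ZMod d) = k')
    (h2 : (2 : ZMod d) ≠ 0) (h2k : (2 * k' : ZMod d) ≠ 0) :
    (GP n k).IsCovering_s11 (GP d k') (Prod.map id π) := by
  have h1 : (1 : ZMod d) ≠ 0 := fun h => h2 (by linear_combination 2 * h)
  have hk0 : (k' : ZMod d) ≠ 0 := fun h => h2k (by rw [h, mul_zero])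
  have h1' : (1 : ZMod n) ≠ 0 := fun h => h1 (by rw [← map_one π, h, map_zero])
  have hk0' : (k : ZMod n) ≠ 0 := fun h => hk0 (by rw [← hk, ← map_natCast π, h, map_zero])
  rintro ⟨_ | _, i⟩
  · rw [GP_neighborSet_false k h1', Prod.map_apply, id_eq, GP_neighborSet_false k' h1]
    convert Set.bijOn_triple_s11 ?_ ?_ ?_ using 2 <;>
      simp only [Prod.map_apply, id_eq, map_add, map_sub, map_one, ne_eq, Prod.mk.injEq, true_and,
        false_and, Bool.false_eq_true, not_false_eq_true]
    exact fun h => h2 (by linear_combination h)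
  · rw [GP_neighborSet_true k hk0', Prod.map_apply, id_eq, GP_neighborSet_true k' hk0]
    convert Set.bijOn_triple_s11 ?_ ?_ ?_ using 2 <;>
      simp only [Prod.map_apply, id_eq, map_add, map_sub, map_natCast, hk, ne_eq, Prod.mk.injEq,
        true_and, false_and, Bool.true_eq_false, not_false_eq_true]
    exact fun h => h2k (by linear_combination h)

end GP

def petersenColoring (v : Bool × ZMod 5) : Fin 2 :=
  if (v.1 = false ∧ (v.2.val = 1 ∨ v.2.val = 4)) ∨ (v.1 = true ∧ (v.2.val = 2 ∨ v.2.val = 3)) then 0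
  else 1

lemma isPerfectColoring_petersenColoring :
    IsPerfectColoring (GP 5 3) petersenColoring !![0, 3; 2, 1] := by
  refine ⟨by decide, ?_⟩
  rintro ⟨_ | _, i⟩ j
  · rw [ncard_adj_and_eq_card_filter_s11 (F := {(false, i + 1), (false, i - 1), (true, i)})
      (by simp [GP_neighborSet_false 3 (by decide) i])]
    revert i j
    decide
  · rw [ncard_adj_and_eq_card_filter_s11 (F := {(true, i + 3), (true, i - 3), (false, i)})
      (by simp [GP_neighborSet_true 3 (by decide) i])]
    revert i j
    decide

theorem stmt_11_general (m t : ℕ) (hm : 2 ≤ m) :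
    IsPerfectColoring (GP (5 * m) (5 * t + 3))
      (fun v =>
        if (v.1 = false ∧ (v.2.val % 5 = 1 ∨ v.2.val % 5 = 4)) ∨
           (v.1 = true ∧ (v.2.val % 5 = 2 ∨ v.2.val % 5 = 3)) then 0 else 1)
      !![0, 3; 2, 1] := by
  have : NeZero (5 * m) := ⟨by omega⟩
  let π := ZMod.castHom (dvd_mul_right 5 m) (ZMod 5)
  have hcover : (GP (5 * m) (5 * t + 3)).IsCovering_s11 (GP 5 3) (Prod.map id π) :=
    GP_isCovering_prodMap π ((ZMod.natCast_eq_natCast_iff' _ _ _).2 (by omega)) (by decide)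
      (by decide)
  have hval (i : ZMod (5 * m)) : (π i).val = i.val % 5 := by
    rw [ZMod.castHom_apply, ZMod.cast_eq_val, ZMod.val_natCast]
  convert isPerfectColoring_petersenColoring.comp_covering hcover
    (Function.surjective_id.prodMap (ZMod.ringHom_surjective π)) using 1
  funext v
  simp only [petersenColoring, Function.comp_apply, Prod.map_fst, Prod.map_snd, id_eq, hval]

theorem stmt_11 (m t : ℕ) (hm : 2 ≤ m) (hk : 2 * (5 * t + 3) < 5 * m) :
    IsPerfectColoring (GP (5 * m) (5 * t + 3))
      (fun v =>
        if (v.1 = false ∧ (v.2.val % 5 = 1 ∨ v.2.val % 5 = 4)) ∨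
           (v.1 = true ∧ (v.2.val % 5 = 2 ∨ v.2.val % 5 = 3)) then 0 else 1)
      !![0, 3; 2, 1] :=
  stmt_11_general m t hm
end

section
/- For n >= 7, if T is a perfect 2-coloring of GP(n,3) with parameter matrix [[1,2],[2,1]] and there exists an index i with T(a_i) = T(b_i) = T(b_{i+1}) = 1 and T(a_{i+1}) = 2, then 10 divides n. -/
/-!
For the matrix `[[1,2],[2,1]]` every closed neighbourhood of the cubic graph `GP(n,3)` contains
exactly two black vertices. Read along the outer and inner cycles starting at `aᵢ`, this is a
linear recurrence for the black indicators `a t = T(aᵢ₊ₜ)`, `b t = T(bᵢ₊ₜ)` which determines both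
sequences from `a 0, a 1, b 0, …, b 5`. The hypothesis fixes `a 0, a 1, b 0, b 1`, and the
0/1-constraints then force `b 2, …, b 5`; so `a` is the explicit sequence `0110010011`
repeated, whose least period is 10. Since `a` also has period `n`, 10 divides `n`.
-/

/-- `a` and `b` are the black indicators along the outer and inner cycles of `GP(·, 3)`, and
every closed neighbourhood (of `a (x + 1)` and of `b (x + 3)`) contains exactly two black
vertices. -/
def ClosedNbhdCondition {M : Type*} [AddMonoidWithOne M] (a b : M → ℕ) : Prop :=
  ∀ x, a x + a (x + 1) + a (x + 2) + b (x + 1) = 2 ∧ b x + b (x + 3) + b (x + 6) + a (x + 3) = 2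

theorem ncard_setOf_eq_or_eq_or_eq_and_eq_one {V : Type*} (T : V → Fin 2) {x y z : V}
    (hxy : x ≠ y) (hxz : x ≠ z) (hyz : y ≠ z) :
    {w | (w = x ∨ w = y ∨ w = z) ∧ T w = 1}.ncard = (T x).val + (T y).val + (T z).val := by
  classical
  have hval : ∀ u : Fin 2, (if u = 1 then 1 else 0) = u.val := by decide
  have hset : {w | (w = x ∨ w = y ∨ w = z) ∧ T w = 1} =
      ↑(({x, y, z} : Finset V).filter (T · = 1)) := by
    ext w; simp
  rw [hset, Set.ncard_coe_finset, Finset.card_filter, Finset.sum_insert (by simp [hxy, hxz]),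
    Finset.sum_insert (by simp [hyz]), Finset.sum_singleton, hval, hval, hval, add_assoc]

-- A white vertex has two black neighbours; a black one has one, plus itself.
theorem IsPerfectColoring.val_add_val_add_val_add_val_eq_two {V : Type*} {G : SimpleGraph V}
    {T : V → Fin 2} (h : IsPerfectColoring G T !![1, 2; 2, 1]) {v x y z : V}
    (hadj : ∀ w, G.Adj v w ↔ w = x ∨ w = y ∨ w = z) (hxy : x ≠ y) (hxz : x ≠ z) (hyz : y ≠ z) :
    (T v).val + (T x).val + (T y).val + (T z).val = 2 := by
  have hcount := h.2 v 1
  simp only [hadj, ncard_setOf_eq_or_eq_or_eq_and_eq_one T hxy hxz hyz] at hcount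
  rcases Fin.exists_fin_two.mp ⟨T v, rfl⟩ with hv | hv <;> simp [hv] at hcount ⊢ <;> omega

theorem ne_and_eq_add_or_eq_add_iff {G : Type*} [AddGroup G] {c : G} (hc : c ≠ 0) (j m : G) :
    ¬j = m ∧ (m = j + c ∨ j = m + c) ↔ m = j - c ∨ m = j + c := by
  constructor
  · rintro ⟨-, h | rfl⟩
    · exact Or.inr h
    · exact Or.inl (add_sub_cancel_right m c).symm
  · rintro (rfl | rfl)
    · exact ⟨fun h => hc (sub_eq_self.mp h.symm), Or.inr (sub_add_cancel j c).symm⟩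
    · exact ⟨fun h => hc (left_eq_add.mp h), Or.inl rfl⟩

theorem GP_adj_outer {n : ℕ} (k : ℕ) (hn : (1 : ZMod n) ≠ 0) (j : ZMod n) (w : Bool × ZMod n) :
    (GP n k).Adj (false, j) w ↔ w = (false, j - 1) ∨ w = (false, j + 1) ∨ w = (true, j) := by
  obtain ⟨_ | _, m⟩ := w <;> simp [GP]
  exact ne_and_eq_add_or_eq_add_iff hn j m

theorem GP_adj_inner {n k : ℕ} (hk : (k : ZMod n) ≠ 0) (j : ZMod n) (w : Bool × ZMod n) :
    (GP n k).Adj (true, j) w ↔ w = (true, j - k) ∨ w = (true, j + k) ∨ w = (false, j) := by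
  obtain ⟨_ | _, m⟩ := w <;> simp [GP]
  · exact eq_comm
  · exact ne_and_eq_add_or_eq_add_iff hk j m

theorem ZMod.natCast_ne_zero_of_pos_of_lt_s15 {m n : ℕ} (hm : 0 < m) (h : m < n) :
    (m : ZMod n) ≠ 0 := by
  rw [Ne, ZMod.natCast_eq_zero_iff]
  exact Nat.not_dvd_of_pos_of_lt hm h

theorem IsPerfectColoring.closedNbhdCondition_GP_three {n : ℕ} (hn : 7 ≤ n)
    {T : Bool × ZMod n → Fin 2} (h : IsPerfectColoring (GP n 3) T !![1, 2; 2, 1]) :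
    ClosedNbhdCondition (fun j => (T (false, j)).val) (fun j => (T (true, j)).val) := by
  intro x
  constructor
  · have hsum := h.val_add_val_add_val_add_val_eq_two
      (GP_adj_outer 3 (by exact_mod_cast ZMod.natCast_ne_zero_of_pos_of_lt_s15 one_pos (by omega))
        (x + 1))
      (by
        simp only [ne_eq, Prod.mk.injEq, true_and]
        intro h'
        exact ZMod.natCast_ne_zero_of_pos_of_lt_s15 (n := n) (m := 2) two_pos (by omega)
          (by push_cast; linear_combination -h'))
      (by simp) (by simp)
    rw [add_sub_cancel_right, show x + 1 + 1 = x + 2 by ring] at hsum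
    dsimp only
    omega
  · have hsum := h.val_add_val_add_val_add_val_eq_two
      (GP_adj_inner (ZMod.natCast_ne_zero_of_pos_of_lt_s15 (m := 3) three_pos (by omega)) (x + 3))
      (by
        simp only [ne_eq, Prod.mk.injEq, true_and]
        intro h'
        exact ZMod.natCast_ne_zero_of_pos_of_lt_s15 (n := n) (m := 6) (by norm_num) (by omega)
          (by push_cast; linear_combination -h'))
      (by simp) (by simp)
    rw [Nat.cast_ofNat, add_sub_cancel_right, show x + 3 + 3 = x + 6 by ring] at hsum
    dsimp only
    omega

namespace ClosedNbhdCondition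

theorem comp_natCast {M : Type*} [AddMonoidWithOne M] {a b : M → ℕ}
    (h : ClosedNbhdCondition a b) (x₀ : M) :
    ClosedNbhdCondition (fun t : ℕ => a (x₀ + t)) (fun t => b (x₀ + t)) := by
  intro t
  simpa only [Nat.cast_add, Nat.cast_ofNat, Nat.cast_one, add_assoc] using h (x₀ + t)

theorem eq_of_window {a b a' b' : ℕ → ℕ} (h : ClosedNbhdCondition a b)
    (h' : ClosedNbhdCondition a' b') (ha : ∀ t < 2, a t = a' t) (hb : ∀ t < 6, b t = b' t) :
    a = a' ∧ b = b' := by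
  suffices key : ∀ t, a t = a' t ∧ b t = b' t from
    ⟨funext fun t => (key t).1, funext fun t => (key t).2⟩
  intro t
  induction t using Nat.strong_induction_on with
  | _ t ih =>
    constructor
    · by_cases ht : t < 2
      · exact ha t ht
      obtain ⟨s, rfl⟩ : ∃ s, t = s + 2 := ⟨t - 2, by omega⟩
      have := (h s).1; have := (h' s).1
      have := (ih s (by omega)).1; have := ih (s + 1) (by omega)
      omega
    · by_cases ht : t < 6
      · exact hb t ht
      obtain ⟨s, rfl⟩ : ∃ s, t = s + 6 := ⟨t - 6, by omega⟩
      have := (h s).2; have := (h' s).2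
      have := (ih s (by omega)).2; have := ih (s + 3) (by omega)
      omega

end ClosedNbhdCondition

def outerPattern : ZMod 10 → ℕ := ![0, 1, 1, 0, 0, 1, 0, 0, 1, 1]

def innerPattern : ZMod 10 → ℕ := ![0, 0, 0, 1, 1, 1, 1, 1, 0, 0]

theorem closedNbhdCondition_pattern : ClosedNbhdCondition outerPattern innerPattern := by
  unfold ClosedNbhdCondition
  decide

theorem eq_zero_of_periodic_outerPattern {r : ZMod 10} (hr : Function.Periodic outerPattern r) :
    r = 0 := by
  revert r
  unfold Function.Periodic
  decide

theorem ClosedNbhdCondition.eq_outerPattern {a b : ℕ → ℕ} (h : ClosedNbhdCondition a b)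
    (ha : ∀ t, a t ≤ 1) (hb : ∀ t, b t ≤ 1) (ha0 : a 0 = 0) (ha1 : a 1 = 1) (hb0 : b 0 = 0)
    (hb1 : b 1 = 0) (t : ℕ) : a t = outerPattern t := by
  obtain ⟨hb2, hb3, hb4, hb5⟩ : b 2 = 0 ∧ b 3 = 1 ∧ b 4 = 1 ∧ b 5 = 1 := by
    obtain ⟨hA0, hB0⟩ := h 0
    obtain ⟨hA1, -⟩ := h 1
    obtain ⟨hA2, -⟩ := h 2
    obtain ⟨hA3, hB3⟩ := h 3
    obtain ⟨hA4, -⟩ := h 4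
    norm_num at hA0 hB0 hA1 hA2 hA3 hB3 hA4
    have := ha 2; have := ha 5; have := ha 6
    have := hb 3; have := hb 4; have := hb 5; have := hb 6
    omega
  have hpat := closedNbhdCondition_pattern.comp_natCast 0
  simp only [zero_add] at hpat
  refine congrFun (h.eq_of_window hpat (fun t ht => ?_) (fun t ht => ?_)).1 t
  · interval_cases t
    exacts [ha0, ha1]
  · interval_cases t
    exacts [hb0, hb1, hb2, hb3, hb4, hb5]

theorem stmt_15 (n : ℕ) (hn : 7 ≤ n) (T : Bool × ZMod n → Fin 2)
    (h : IsPerfectColoring (GP n 3) T !![1, 2; 2, 1])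
    (i : ZMod n)
    (hi : T (false, i) = 0 ∧ T (true, i) = 0 ∧ T (true, i + 1) = 0 ∧
      T (false, i + 1) = 1) :
    10 ∣ n := by
  obtain ⟨ha0, hb0, hb1, ha1⟩ := hi
  set a : ℕ → ℕ := fun t => (T (false, i + t)).val
  set b : ℕ → ℕ := fun t => (T (true, i + t)).val
  have hab : ClosedNbhdCondition a b := (h.closedNbhdCondition_GP_three hn).comp_natCast i
  have ha_pat := hab.eq_outerPattern (fun t => Nat.le_of_lt_succ (T _).isLt)
    (fun t => Nat.le_of_lt_succ (T _).isLt) (by simp [a, ha0]) (by simp [a, ha1])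
    (by simp [b, hb0]) (by simp [b, hb1])
  refine (ZMod.natCast_eq_zero_iff n 10).mp (eq_zero_of_periodic_outerPattern fun s => ?_)
  have ha_periodic : a (s.val + n) = a s.val := by simp [a]
  simpa [ha_pat] using ha_periodic
end

section
/- Any parameter matrix of a perfect 2-coloring of a connected cubic graph is one of the six matrices [[2,1],[1,2]], [[2,1],[2,1]], [[1,2],[2,1]], [[0,3],[1,2]], [[0,3],[2,1]], [[0,3],[3,0]], up to switching colors (i.e., up to simultaneously swapping the rows and columns). -/
lemma fin2_cases (a : Fin 2) : a = 0 ∨ a = 1 := by revert a; decide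

lemma walk_same_color {V : Type*} {G : SimpleGraph V} {T : V → Fin 2} {c : Fin 2}
    (hstay : ∀ v w, G.Adj v w → T v = c → T w = c)
    {u v : V} (p : G.Walk u v) (hu : T u = c) : T v = c := by
  induction p with
  | nil => exact hu
  | cons h p ih => exact ih (hstay _ _ h hu)

theorem stmt_19 {V : Type*} (G : SimpleGraph V) (hconn : G.Connected)
    (hcubic : ∀ v : V, {w | G.Adj v w}.ncard = 3)
    (T : V → Fin 2) (A : Matrix (Fin 2) (Fin 2) ℕ)
    (h : IsPerfectColoring G T A) :
    A ∈ ({!![2, 1; 1, 2], !![2, 1; 2, 1], !![1, 2; 2, 1],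
          !![0, 3; 1, 2], !![0, 3; 2, 1], !![0, 3; 3, 0]} :
            Set (Matrix (Fin 2) (Fin 2) ℕ)) ∨
    !![A 1 1, A 1 0; A 0 1, A 0 0] ∈
        ({!![2, 1; 1, 2], !![2, 1; 2, 1], !![1, 2; 2, 1],
          !![0, 3; 1, 2], !![0, 3; 2, 1], !![0, 3; 3, 0]} :
            Set (Matrix (Fin 2) (Fin 2) ℕ)) := by
  obtain ⟨hsurj, hcnt⟩ := h
  -- neighbor sets are finite
  have hfin : ∀ v : V, {w | G.Adj v w}.Finite := by
    intro v
    by_contra hinf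
    have := Set.Infinite.ncard hinf
    rw [hcubic v] at this; omega
  -- row sums are 3
  have hrow : ∀ v : V, A (T v) 0 + A (T v) 1 = 3 := by
    intro v
    have hdisj : Disjoint {w | G.Adj v w ∧ T w = 0} {w | G.Adj v w ∧ T w = 1} := by
      rw [Set.disjoint_left]
      rintro w ⟨_, h0⟩ ⟨_, h1⟩
      rw [h0] at h1; exact absurd h1 (by decide)
    have hunion : {w | G.Adj v w ∧ T w = 0} ∪ {w | G.Adj v w ∧ T w = 1}
        = {w | G.Adj v w} := by
      ext w
      simp only [Set.mem_union, Set.mem_setOf_eq]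
      constructor
      · rintro (⟨hw, _⟩ | ⟨hw, _⟩) <;> exact hw
      · intro hw
        rcases fin2_cases (T w) with h0 | h1
        · exact Or.inl ⟨hw, h0⟩
        · exact Or.inr ⟨hw, h1⟩
    have hf0 : {w | G.Adj v w ∧ T w = 0}.Finite :=
      (hfin v).subset (fun w hw => hw.1)
    have hf1 : {w | G.Adj v w ∧ T w = 1}.Finite :=
      (hfin v).subset (fun w hw => hw.1)
    have := Set.ncard_union_eq hdisj hf0 hf1
    rw [hunion, hcubic v, hcnt v 0, hcnt v 1] at this
    omega
  -- empty count means no neighbors of the other color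
  have hstay : ∀ (c : Fin 2), A c (1 - c) = 0 →
      ∀ v w : V, G.Adj v w → T v = c → T w = c := by
    intro c hc v w hadj hv
    have hcount := hcnt v (1 - c)
    rw [hv, hc] at hcount
    have hf : {w | G.Adj v w ∧ T w = 1 - c}.Finite :=
      (hfin v).subset (fun w hw => hw.1)
    have hemp := (Set.ncard_eq_zero hf).mp hcount
    by_contra hne
    have hwc : T w = 1 - c := by
      rcases fin2_cases c with rfl | rfl <;> rcases fin2_cases (T w) with h | h <;>
        simp_all <;> exact hne (by omega)
    have : w ∈ {w | G.Adj v w ∧ T w = 1 - c} := ⟨hadj, hwc⟩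
    rw [hemp] at this
    exact this
  -- off-diagonal entries are positive
  have hoff : ∀ c : Fin 2, A c (1 - c) ≠ 0 := by
    intro c hc
    obtain ⟨u, hu⟩ := hsurj c
    obtain ⟨x, hx⟩ := hsurj (1 - c)
    obtain ⟨p⟩ := hconn u x
    have := walk_same_color (hstay c hc) p hu
    rw [hx] at this
    rcases fin2_cases c with rfl | rfl <;> simp_all
  obtain ⟨u, hu⟩ := hsurj 0
  obtain ⟨x, hx⟩ := hsurj 1
  have hr0 : A 0 0 + A 0 1 = 3 := by have := hrow u; rwa [hu] at this
  have hr1 : A 1 0 + A 1 1 = 3 := by have := hrow x; rwa [hx] at this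
  have h01 : A 0 1 ≠ 0 := by have := hoff 0; simpa using this
  have h10 : A 1 0 ≠ 0 := by have := hoff 1; simpa using this
  have hA : A = !![A 0 0, A 0 1; A 1 0, A 1 1] := Matrix.etaExpand_eq A |>.symm
  simp only [Set.mem_insert_iff, Set.mem_singleton_iff]
  have e01 : A 0 1 = 1 ∨ A 0 1 = 2 ∨ A 0 1 = 3 := by omega
  have e10 : A 1 0 = 1 ∨ A 1 0 = 2 ∨ A 1 0 = 3 := by omega
  rcases e01 with h1 | h1 | h1 <;> rcases e10 with h2 | h2 | h2 <;>
    [skip; skip; skip; skip; skip; skip; skip; skip; skip] <;>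
    · have h00 : A 0 0 = 3 - A 0 1 := by omega
      have h11 : A 1 1 = 3 - A 1 0 := by omega
      rw [h1] at h00 hA
      rw [h2] at h11 hA
      norm_num at h00 h11
      rw [h00, h11] at hA
      rw [hA]
      simp
end
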